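/- Let u = w₁w₂ and v = w₂w₃ be Lyndon words over a well-ordered alphabet with u >_lex v. Then w₁w₂w₃ is a Lyndon word. -/

import Mathlib

/-
The proper suffixes of `w₁w₂w₃` come in two kinds. For a suffix `a w₂ w₃` with `a` a nonempty
proper suffix of `w₁`, already `a w₂ <_lex w₁w₂` since `w₁w₂` is Lyndon; as `a w₂` is the shorter
word this is decided at a letter, so it survives appending `w₃` to both sides. Every other suffix
is `≤_lex w₂w₃`, so it remains to show `w₂w₃ <_lex w₁w₂w₃`. This follows from `w₂w₃ <_lex w₁w₂`
when a letter decides that comparison. Otherwise `w₁w₂` is a proper prefix of `w₂w₃`, hence `w₂`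
is a prefix of `w₁w₂`; a Lyndon word has no nonempty proper suffix that is also a prefix, so
`w₂ = []`. Then `w₃ = w₁z` with `z <_lex w₃`, and prepending `w₁` gives `w₃ <_lex w₁w₃`.
-/

variable {X : Type*} [LinearOrder X] [WellFoundedLT X]

/-- The partial order `≺` on words: `u ≺ v` iff `u = r ++ x :: s`, `v = r ++ y :: t`
with letters `x < y`. -/
def Prec (u v : List X) : Prop :=
  ∃ (r s t : List X) (x y : X), x < y ∧ u = r ++ x :: s ∧ v = r ++ y :: t

/-- The pseudo-lexicographic order: `u <_lex v` iff `v` is a proper prefix of `u` or `u ≺ v`. -/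
def PLex (u v : List X) : Prop :=
  (v <+: u ∧ v ≠ u) ∨ Prec u v

/-- `u ≤_lex v`. -/
def PLexLe (u v : List X) : Prop := u = v ∨ PLex u v

/-- A Lyndon word (Kharchenko convention): a nonempty word strictly greater in the
pseudo-lexicographic order than each of its proper nonempty suffixes. -/
def IsLyndon (u : List X) : Prop :=
  u ≠ [] ∧ ∀ v w : List X, u = v ++ w → v ≠ [] → w ≠ [] → PLex w u

section

variable {α : Type*} [LinearOrder α]

/-- With the sentinel `⊤` appended, a proper prefix compares greater than its extensions, so
`PLex` becomes the lexicographic order `List.Lex` (`plex_iff_lex_withSentinel`). -/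
def withSentinel (u : List α) : List (WithTop α) := u.map WithTop.some ++ [⊤]

theorem Prec.append {u v : List α} (h : Prec u v) (c d : List α) : Prec (u ++ c) (v ++ d) := by
  obtain ⟨r, s, t, x, y, hxy, rfl, rfl⟩ := h
  exact ⟨r, s ++ c, t ++ d, x, y, hxy, by simp, by simp⟩

theorem PLex.append_left {s t : List α} (h : PLex s t) (r : List α) : PLex (r ++ s) (r ++ t) := by
  rcases h with ⟨⟨d, rfl⟩, hne⟩ | ⟨p, s', t', a, b, hab, rfl, rfl⟩
  · exact Or.inl ⟨⟨d, by simp⟩, by simpa using hne⟩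
  · exact Or.inr ⟨r ++ p, s', t', a, b, hab, by simp, by simp⟩

theorem plex_iff_lex_withSentinel {u v : List α} :
    PLex u v ↔ List.Lex (· < ·) (withSentinel u) (withSentinel v) := by
  constructor
  · rintro (⟨⟨d, rfl⟩, hne⟩ | ⟨r, s, t, x, y, hxy, rfl, rfl⟩)
    · obtain ⟨a, d, rfl⟩ := List.exists_cons_of_ne_nil (by simpa using hne)
      simpa [withSentinel] using
        (List.Lex.rel (r := (· < ·)) (l₁ := d.map WithTop.some ++ [⊤]) (l₂ := [])
          (WithTop.coe_lt_top a)).append_left _ (v.map WithTop.some)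
    · simpa [withSentinel] using
        (List.Lex.rel (r := (· < ·)) (l₁ := s.map WithTop.some ++ [⊤])
          (l₂ := t.map WithTop.some ++ [⊤]) (WithTop.coe_lt_coe.mpr hxy)).append_left _
          (r.map WithTop.some)
  · induction u generalizing v with
    | nil =>
      cases v <;> rintro (_ | ⟨h⟩ | ⟨h⟩) <;> simp_all
    | cons x s ih =>
      cases v with
      | nil => exact fun _ => Or.inl ⟨⟨x :: s, rfl⟩, by simp⟩
      | cons y t =>
        rintro (_ | hxy | hst)
        · exact Or.inr ⟨[], s, t, x, y, WithTop.coe_lt_coe.mp hxy, rfl, rfl⟩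
        · exact (ih hst).append_left [x]

theorem PLex.asymm {u v : List α} (h : PLex u v) : ¬ PLex v u := fun h' =>
  asymm_of (List.Lex (· < ·)) (plex_iff_lex_withSentinel.mp h) (plex_iff_lex_withSentinel.mp h')

theorem PLex.trans {u v w : List α} (h : PLex u v) (h' : PLex v w) : PLex u w :=
  plex_iff_lex_withSentinel.mpr <| List.lex_trans lt_trans
    (plex_iff_lex_withSentinel.mp h) (plex_iff_lex_withSentinel.mp h')

theorem PLex.prec_of_length_le {u v : List α} (h : PLex u v) (hl : u.length ≤ v.length) :
    Prec u v := by
  rcases h with ⟨hpre, hne⟩ | h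
  · exact absurd (hpre.eq_of_length (le_antisymm hpre.length_le hl)) hne
  · exact h

theorem IsLyndon.not_prefix_of_suffix {p s : List α} (h : IsLyndon (p ++ s)) (hp : p ≠ [])
    (hs : s ≠ []) : ¬ s <+: p ++ s := fun hpre =>
  (h.2 p s rfl hp hs).asymm (Or.inl ⟨hpre, by simpa using hp⟩)

theorem plex_suffix_append_of_isLyndon {w₁ w₂ w₃ : List α} (hw₁ : w₁ ≠ [])
    (hu : IsLyndon (w₁ ++ w₂)) (hv : IsLyndon (w₂ ++ w₃)) (hlt : PLex (w₂ ++ w₃) (w₁ ++ w₂)) :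
    PLex (w₂ ++ w₃) (w₁ ++ w₂ ++ w₃) := by
  rcases hlt with ⟨⟨z, hz⟩, hne⟩ | hprec
  · obtain rfl : w₂ = [] := by
      by_contra hw₂
      exact hu.not_prefix_of_suffix hw₁ hw₂
        (List.prefix_of_prefix_length_le (List.prefix_append w₂ w₃) ⟨z, hz⟩ (by simp))
    simp only [List.nil_append, List.append_nil] at hz hne hv ⊢
    have hz₀ : z ≠ [] := by rintro rfl; exact hne (by simpa using hz)
    simpa [hz] using (hv.2 w₁ z hz.symm hw₁ hz₀).append_left w₁
  · exact Or.inr (by simpa using hprec.append [] w₃)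

end

/-- If `u = w₁w₂` and `v = w₂w₃` are Lyndon words with `u >_lex v`,
then `w₁w₂w₃` is a Lyndon word. -/
theorem isLyndon_append (w₁ w₂ w₃ : List X) (hu : IsLyndon (w₁ ++ w₂))
    (hv : IsLyndon (w₂ ++ w₃)) (hlt : PLex (w₂ ++ w₃) (w₁ ++ w₂)) :
    IsLyndon (w₁ ++ w₂ ++ w₃) := by
  rcases eq_or_ne w₁ [] with rfl | hw₁
  · simpa using hv
  have hv_lt := plex_suffix_append_of_isLyndon hw₁ hu hv hlt
  refine ⟨by simp [hw₁], fun p s hps hp hs => ?_⟩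
  rw [List.append_assoc] at hps
  rcases List.append_eq_append_iff.mp hps.symm with ⟨b, rfl, rfl⟩ | ⟨a, rfl, hva⟩
  · rcases eq_or_ne b [] with rfl | hb
    · simpa using hv_lt
    · have hsuffix := hu.2 p (b ++ w₂) (by simp) hp (by simp [hb])
      have hlen : (b ++ w₂).length ≤ (p ++ b ++ w₂).length := by simp
      exact Or.inr (by simpa using (hsuffix.prec_of_length_le hlen).append w₃ w₃)
  · rcases eq_or_ne a [] with rfl | ha
    · simpa [hva] using hv_lt
    · exact (hv.2 a s hva ha hs).trans hv_lt
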